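/- There exists a Prüfer domain R (with quotient field K) and nonzero fractional ideals A and B of R such that (A ∩ B)_v ⊊ A_v ∩ B_v; in particular, the v-operation on a Prüfer domain need not be stable. -/

import Mathlib

open PowerSeries

set_option synthInstance.maxHeartbeats 1000000
set_option maxHeartbeats 2000000

noncomputable section
namespace St19

def Rs : Subring (PowerSeries ℚ) :=
  ((Int.castRingHom ℚ).range).comap (PowerSeries.constantCoeff (R := ℚ))

abbrev R := ↥Rs

lemma mem_Rs {f : PowerSeries ℚ} : f ∈ Rs ↔ ∃ z : ℤ, (z : ℚ) = constantCoeff (R := ℚ) f := by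
  simp [Rs, Subring.mem_comap, RingHom.mem_range, eq_comm]

lemma mem_Rs_of_cc0 {f : PowerSeries ℚ} (h : constantCoeff (R := ℚ) f = 0) : f ∈ Rs :=
  mem_Rs.2 ⟨0, by simp [h]⟩

def cXm (e : ℚ) (m : ℕ) (h : m ≠ 0 ∨ ∃ z : ℤ, (z : ℚ) = e) : R :=
  ⟨C (R := ℚ) e * X ^ m, by
    rcases h with h | ⟨z, hz⟩
    · exact mem_Rs_of_cc0 (by simp [zero_pow h])
    · refine mem_Rs.2 ?_
      cases m with
      | zero => exact ⟨z, by simpa using hz⟩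
      | succ m => exact ⟨0, by simp [pow_succ]⟩⟩

lemma coe_intCast (z : ℤ) : ((z : R) : PowerSeries ℚ) = C (R := ℚ) (z : ℚ) := by
  push_cast
  rw [map_intCast]

lemma rep (f : R) (hf : f ≠ 0) :
    ∃ (m : ℕ) (c : ℚ) (u v : R), c ≠ 0 ∧ u * v = 1 ∧
      (f : PowerSeries ℚ) = C (R := ℚ) c * X ^ m * (u : PowerSeries ℚ) ∧
      (m = 0 → ∃ z : ℤ, (z : ℚ) = c) := by
  have hf0 : (f : PowerSeries ℚ) ≠ 0 := fun h => hf (Subtype.ext h)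
  have hlt : order (f : PowerSeries ℚ) < ⊤ := order_finite_iff_ne_zero.2 hf0
  set m := (order (f : PowerSeries ℚ)).toNat with hm
  set g := divXPowOrder (f : PowerSeries ℚ) with hg
  have hfg : X ^ m * g = (f : PowerSeries ℚ) :=
    X_pow_order_mul_divXPowOrder
  have hc : constantCoeff (R := ℚ) g ≠ 0 := by
    have h1 : coeff (R := ℚ) m (f : PowerSeries ℚ) ≠ 0 := coeff_order hf0
    rw [← hfg] at h1
    have h2 := coeff_X_pow_mul g m 0
    rw [zero_add] at h2
    rw [h2] at h1
    simpa using h1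
  set c := constantCoeff (R := ℚ) g with hcc
  set h := C (R := ℚ) c⁻¹ * g with hh
  have hgch : g = C (R := ℚ) c * h := by
    rw [hh, ← mul_assoc, ← map_mul, mul_inv_cancel₀ hc, map_one, one_mul]
  have hh1 : constantCoeff (R := ℚ) h = 1 := by
    simp [hh, ← hcc, inv_mul_cancel₀ hc]
  have hu : IsUnit h := isUnit_iff_constantCoeff.2 (by simp [hh1])
  obtain ⟨U, hU⟩ := hu
  have hUinv : (U : PowerSeries ℚ) * (U⁻¹ : Units (PowerSeries ℚ)) = 1 := U.mul_inv
  have hinv1 : constantCoeff (R := ℚ) ((U⁻¹ : Units (PowerSeries ℚ)) : PowerSeries ℚ) = 1 := by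
    have := congrArg (constantCoeff (R := ℚ)) hUinv
    rw [map_mul, map_one, hU, hh1, one_mul] at this
    exact this
  refine ⟨m, c, ⟨h, mem_Rs.2 ⟨1, by simp [hh1]⟩⟩,
    ⟨(U⁻¹ : Units (PowerSeries ℚ)), mem_Rs.2 ⟨1, by simp [hinv1]⟩⟩, hc, ?_, ?_, ?_⟩
  · apply Subtype.ext
    show h * ((U⁻¹ : Units (PowerSeries ℚ)) : PowerSeries ℚ) = 1
    rw [← hU]; exact hUinv
  · rw [← hfg, hgch]
    simp [mul_comm, mul_assoc, mul_left_comm]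
  · intro hm0
    have : (f : PowerSeries ℚ) = g := by rw [← hfg, hm0, pow_zero, one_mul]
    obtain ⟨z, hz⟩ := mem_Rs.1 f.2
    exact ⟨z, by rw [hcc, ← this, ← hz]⟩


lemma ratGcd (c d : ℚ) :
    ∃ (e : ℚ) (c₁ d₁ α β : ℤ), c = e * (c₁ : ℚ) ∧ d = e * (d₁ : ℚ) ∧
      e = (α : ℚ) * c + (β : ℚ) * d ∧
      ((∃ zc : ℤ, (zc : ℚ) = c) → (∃ zd : ℤ, (zd : ℚ) = d) → ∃ z : ℤ, (z : ℚ) = e) := by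
  set p : ℤ := c.num * d.den with hpdef
  set q : ℤ := d.num * c.den with hqdef
  set D : ℚ := (c.den : ℚ) * (d.den : ℚ) with hDdef
  have hD : D ≠ 0 := by
    simp [hDdef, Rat.den_ne_zero]
  have hden : ((c.den : ℚ)) ≠ 0 := by exact_mod_cast c.den_ne_zero
  have hden' : ((d.den : ℚ)) ≠ 0 := by exact_mod_cast d.den_ne_zero
  have hcnum : (c.num : ℚ) = c * c.den := by
    exact (Rat.mul_den_eq_num c).symm
  have hdnum : (d.num : ℚ) = d * d.den := by
    exact (Rat.mul_den_eq_num d).symm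
  have hp : (p : ℚ) = c * D := by
    push_cast [hpdef, hDdef]
    rw [hcnum]; ring
  have hq : (q : ℚ) = d * D := by
    push_cast [hqdef, hDdef]
    rw [hdnum]; ring
  obtain ⟨c₁, hc₁⟩ : ((Int.gcd p q : ℤ)) ∣ p := Int.gcd_dvd_left p q
  obtain ⟨d₁, hd₁⟩ : ((Int.gcd p q : ℤ)) ∣ q := Int.gcd_dvd_right p q
  refine ⟨(Int.gcd p q : ℚ) / D, c₁, d₁, Int.gcdA p q, Int.gcdB p q, ?_, ?_, ?_, ?_⟩
  · have : (p : ℚ) = (Int.gcd p q : ℚ) * c₁ := by exact_mod_cast congrArg (fun z : ℤ => (z : ℚ)) hc₁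
    rw [div_mul_eq_mul_div, ← this, hp, mul_div_assoc, div_self hD, mul_one]
  · have : (q : ℚ) = (Int.gcd p q : ℚ) * d₁ := by exact_mod_cast congrArg (fun z : ℤ => (z : ℚ)) hd₁
    rw [div_mul_eq_mul_div, ← this, hq, mul_div_assoc, div_self hD, mul_one]
  · have hbez : ((Int.gcd p q : ℤ) : ℚ) = (p : ℚ) * (Int.gcdA p q : ℚ) + (q : ℚ) * (Int.gcdB p q : ℚ) := by
      exact_mod_cast congrArg (fun z : ℤ => (z : ℚ)) (Int.gcd_eq_gcd_ab p q)
    push_cast at hbez ⊢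
    rw [hbez, hp, hq]
    field_simp
  · rintro ⟨zc, hzc⟩ ⟨zd, hzd⟩
    have h1 : c.den = 1 := by rw [← hzc]; exact Rat.den_intCast zc
    have h2 : d.den = 1 := by rw [← hzd]; exact Rat.den_intCast zd
    refine ⟨Int.gcd p q, ?_⟩
    rw [hDdef, h1, h2]
    push_cast
    ring


lemma main_case (a b : R) (m k : ℕ) (c d : ℚ) (u v u' v' : R)
    (hc : c ≠ 0) (huv : u * v = 1) (hu'v' : u' * v' = 1)
    (ha : (a : PowerSeries ℚ) = C (R := ℚ) c * X ^ m * (u : PowerSeries ℚ))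
    (hb : (b : PowerSeries ℚ) = C (R := ℚ) d * X ^ k * (u' : PowerSeries ℚ))
    (hmc : m = 0 → ∃ z : ℤ, (z : ℚ) = c) (hkd : k = 0 → ∃ z : ℤ, (z : ℚ) = d)
    (hmk : m ≤ k) : ∃ g : R, Ideal.span {a, b} = Ideal.span {g} := by
  have huv' : (u : PowerSeries ℚ) * (v : PowerSeries ℚ) = 1 := by
    exact_mod_cast congrArg (Subtype.val) huv
  have hu'v'' : (u' : PowerSeries ℚ) * (v' : PowerSeries ℚ) = 1 := by
    exact_mod_cast congrArg (Subtype.val) hu'v'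
  rcases eq_or_lt_of_le hmk with heq | hlt
  · -- m = k
    subst heq
    obtain ⟨e, c₁, d₁, α, β, hce, hde, hebez, hint⟩ := ratGcd c d
    have harg : m ≠ 0 ∨ ∃ z : ℤ, (z : ℚ) = e := by
      by_cases h : m = 0
      · exact Or.inr (hint (hmc h) (hkd h))
      · exact Or.inl h
    refine ⟨cXm e m harg, le_antisymm (Ideal.span_le.2 ?_) (Ideal.span_le.2 ?_)⟩
    · refine Set.insert_subset_iff.2 ⟨?_, Set.singleton_subset_iff.2 ?_⟩
      · rw [SetLike.mem_coe, Ideal.mem_span_singleton']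
        refine ⟨(c₁ : R) * u, Subtype.ext ?_⟩
        show ((c₁ : R) : PowerSeries ℚ) * (u : PowerSeries ℚ) * (C (R := ℚ) e * X ^ m)
            = (a : PowerSeries ℚ)
        rw [coe_intCast, ha, hce, map_mul]
        ring
      · rw [SetLike.mem_coe, Ideal.mem_span_singleton']
        refine ⟨(d₁ : R) * u', Subtype.ext ?_⟩
        show ((d₁ : R) : PowerSeries ℚ) * (u' : PowerSeries ℚ) * (C (R := ℚ) e * X ^ m)
            = (b : PowerSeries ℚ)
        rw [coe_intCast, hb, hde, map_mul]
        ring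
    · refine Set.singleton_subset_iff.2 ?_
      rw [SetLike.mem_coe, Ideal.mem_span_pair]
      refine ⟨(α : R) * v, (β : R) * v', Subtype.ext ?_⟩
      show ((α : R) : PowerSeries ℚ) * (v : PowerSeries ℚ) * (a : PowerSeries ℚ)
          + ((β : R) : PowerSeries ℚ) * (v' : PowerSeries ℚ) * (b : PowerSeries ℚ)
          = C (R := ℚ) e * X ^ m
      rw [coe_intCast, coe_intCast, ha, hb, hebez]
      rw [show C (R := ℚ) ((α : ℚ)) * (v : PowerSeries ℚ) * (C (R := ℚ) c * X ^ m * (u : PowerSeries ℚ))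
          + C (R := ℚ) ((β : ℚ)) * (v' : PowerSeries ℚ) * (C (R := ℚ) d * X ^ m * (u' : PowerSeries ℚ))
          = C (R := ℚ) ((α : ℚ)) * C (R := ℚ) c * X ^ m * ((u : PowerSeries ℚ) * (v : PowerSeries ℚ))
          + C (R := ℚ) ((β : ℚ)) * C (R := ℚ) d * X ^ m * ((u' : PowerSeries ℚ) * (v' : PowerSeries ℚ)) by ring]
      rw [huv', hu'v'']
      rw [map_add, map_mul, map_mul]
      ring
  · -- m < k
    have hg : ((a * v : R) : PowerSeries ℚ) = C (R := ℚ) c * X ^ m := by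
      show (a : PowerSeries ℚ) * (v : PowerSeries ℚ) = _
      rw [ha, mul_assoc, huv', mul_one]
    refine ⟨a * v, le_antisymm (Ideal.span_le.2 ?_) (Ideal.span_le.2 ?_)⟩
    · refine Set.insert_subset_iff.2 ⟨?_, Set.singleton_subset_iff.2 ?_⟩
      · rw [SetLike.mem_coe, Ideal.mem_span_singleton']
        refine ⟨u, Subtype.ext ?_⟩
        show (u : PowerSeries ℚ) * ((a * v : R) : PowerSeries ℚ) = (a : PowerSeries ℚ)
        rw [hg, ha]
        ring
      · rw [SetLike.mem_coe, Ideal.mem_span_singleton']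
        refine ⟨cXm (d / c) (k - m) (Or.inl (by omega)) * u', Subtype.ext ?_⟩
        show C (R := ℚ) (d / c) * X ^ (k - m) * (u' : PowerSeries ℚ) * ((a * v : R) : PowerSeries ℚ)
            = (b : PowerSeries ℚ)
        rw [hg, hb]
        rw [show C (R := ℚ) (d / c) * X ^ (k - m) * (u' : PowerSeries ℚ) * (C (R := ℚ) c * X ^ m)
            = (C (R := ℚ) (d / c) * C (R := ℚ) c) * (X ^ (k - m) * X ^ m) * (u' : PowerSeries ℚ) by ring]
        rw [← map_mul, div_mul_cancel₀ _ hc, ← pow_add, Nat.sub_add_cancel hmk]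
    · refine Set.singleton_subset_iff.2 ?_
      rw [SetLike.mem_coe]
      exact Ideal.mul_mem_right v _ (Ideal.subset_span (Set.mem_insert a {b}))

lemma pair (a b : R) : ∃ g : R, Ideal.span {a, b} = Ideal.span {g} := by
  by_cases ha : a = 0
  · subst ha
    exact ⟨b, by rw [Ideal.span_insert, Ideal.span_singleton_eq_bot.2 rfl, bot_sup_eq]⟩
  by_cases hb : b = 0
  · subst hb
    exact ⟨a, by rw [Ideal.span_pair_comm, Ideal.span_insert, Ideal.span_singleton_eq_bot.2 rfl, bot_sup_eq]⟩
  obtain ⟨m, c, u, v, hc, huv, hac, hmc⟩ := rep a ha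
  obtain ⟨k, d, u', v', hd, hu'v', hbd, hkd⟩ := rep b hb
  rcases le_or_gt m k with h | h
  · exact main_case a b m k c d u v u' v' hc huv hu'v' hac hbd hmc hkd h
  · obtain ⟨g, hg⟩ := main_case b a k m d c u' v' u v hd hu'v' huv hbd hac hkd hmc h.le
    exact ⟨g, by rw [Ideal.span_pair_comm]; exact hg⟩

lemma principal (I : Ideal R) (h : I.FG) : ∃ g : R, I = Ideal.span {g} := by
  refine Submodule.fg_induction (motive := fun J _ => ∃ g : R, J = Ideal.span {g})
    (fun x => ⟨x, rfl⟩) ?_ I h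
  rintro I₁ I₂ _ _ ⟨g₁, rfl⟩ ⟨g₂, rfl⟩
  obtain ⟨g, hg⟩ := pair g₁ g₂
  exact ⟨g, by rw [← hg, Ideal.span_insert]⟩

def Xr : R := ⟨X, mem_Rs_of_cc0 (by simp)⟩

lemma Xr_ne_zero : Xr ≠ 0 := by
  intro h
  have := congrArg Subtype.val h
  simpa [Xr] using this

abbrev K := FractionRing R

instance : CommRing R := inferInstance
instance : IsDomain R := inferInstance
instance : Field K := inferInstance
instance : Algebra R K := inferInstance
instance : Module R K := inferInstance
instance : IsFractionRing R K := inferInstance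

lemma alg_inj : Function.Injective (algebraMap R K) := IsFractionRing.injective R K

lemma alg_ne {r : R} (h : r ≠ 0) : algebraMap R K r ≠ 0 := fun h0 => h (alg_inj (by simp [h0]))

lemma prufer (I : Ideal R) (hI : I ≠ ⊥) (hfg : I.FG) :
    ∃ J : FractionalIdeal (nonZeroDivisors R) K,
      (I : FractionalIdeal (nonZeroDivisors R) K) * J = 1 := by
  obtain ⟨g, rfl⟩ := principal I hfg
  have hg : g ≠ 0 := fun h => hI (by rw [h]; exact Ideal.span_singleton_eq_bot.2 rfl)
  refine ⟨FractionalIdeal.spanSingleton _ (algebraMap R K g)⁻¹, ?_⟩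
  rw [FractionalIdeal.coeIdeal_span_singleton,
    FractionalIdeal.spanSingleton_mul_spanSingleton, mul_inv_cancel₀ (alg_ne hg),
    FractionalIdeal.spanSingleton_one]

-- the submodule ∪ₙ t⁻ⁿ R of K
def yel (t : R) : K := (algebraMap R K t)⁻¹

def Asub (t : R) : Submodule R K := Submodule.span R (Set.range fun n : ℕ => yel t ^ n)

lemma smul_y_eq {t w r : R} (ht : t ≠ 0) {n : ℕ} (h : t ^ n * w = r) :
    r • yel t ^ n = algebraMap R K w := by
  have h2 := congrArg (algebraMap R K) h
  rw [map_mul, map_pow] at h2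
  rw [Algebra.smul_def, ← h2, yel, inv_pow]
  have hpn : (algebraMap R K t) ^ n ≠ 0 := pow_ne_zero _ (alg_ne ht)
  field_simp

lemma y_identity {t : R} (ht : t ≠ 0) {n m : ℕ} (h : n ≤ m) :
    (t ^ (m - n) : R) • yel t ^ m = yel t ^ n := by
  rw [Algebra.smul_def, map_pow, yel, inv_pow, inv_pow]
  rw [pow_sub₀ _ (alg_ne ht) h]
  have h1 : (algebraMap R K t) ^ n ≠ 0 := pow_ne_zero _ (alg_ne ht)
  have h2 : (algebraMap R K t) ^ m ≠ 0 := pow_ne_zero _ (alg_ne ht)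
  field_simp

lemma mem_Asub {t : R} (ht : t ≠ 0) {x : K} :
    x ∈ Asub t ↔ ∃ (n : ℕ) (r : R), r • yel t ^ n = x := by
  constructor
  · intro hx
    rw [Asub, Submodule.span_range_eq_iSup] at hx
    have hmono : Monotone fun n : ℕ => (Submodule.span R {yel t ^ n} : Submodule R K) := by
      intro n m hnm
      rw [Submodule.span_le, Set.singleton_subset_iff, SetLike.mem_coe,
        ← y_identity ht hnm]
      exact Submodule.smul_mem _ _ (Submodule.mem_span_singleton_self _)
    obtain ⟨n, hn⟩ := (Submodule.mem_iSup_of_directed _ hmono.directed_le).1 hx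
    obtain ⟨r, hr⟩ := Submodule.mem_span_singleton.1 hn
    exact ⟨n, r, hr⟩
  · rintro ⟨n, r, rfl⟩
    exact Submodule.smul_mem _ _ (Submodule.subset_span ⟨n, rfl⟩)

-- elements `X / tⁿ` of R, for t with nonzero constant coefficient
lemma exists_Xdiv {t : R} (ht : constantCoeff (R := ℚ) (t : PowerSeries ℚ) ≠ 0) (n : ℕ) :
    ∃ w : R, t ^ n * w = Xr := by
  have hU : IsUnit (t : PowerSeries ℚ) := isUnit_iff_constantCoeff.2 (isUnit_iff_ne_zero.2 ht)
  obtain ⟨W, hW⟩ := hU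
  have hWinv1 : (t : PowerSeries ℚ) * ((W⁻¹ : Units (PowerSeries ℚ)) : PowerSeries ℚ) = 1 := by
    rw [← hW]; exact W.mul_inv
  refine ⟨⟨X * ((W⁻¹ : Units (PowerSeries ℚ)) : PowerSeries ℚ) ^ n, mem_Rs_of_cc0 (by simp)⟩,
    Subtype.ext ?_⟩
  show ((t : PowerSeries ℚ)) ^ n * (X * _ ^ n) = X
  rw [show ((t : PowerSeries ℚ)) ^ n * (X * ((W⁻¹ : Units (PowerSeries ℚ)) : PowerSeries ℚ) ^ n)
      = X * ((t : PowerSeries ℚ) * ((W⁻¹ : Units (PowerSeries ℚ)) : PowerSeries ℚ)) ^ n by ring]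
  rw [hWinv1, one_pow, mul_one]

lemma frac_Asub {t : R} (ht : constantCoeff (R := ℚ) (t : PowerSeries ℚ) ≠ 0) :
    IsFractional (nonZeroDivisors R) (Asub t) := by
  have ht0 : t ≠ 0 := fun h => ht (by rw [h]; simp)
  refine ⟨Xr, mem_nonZeroDivisors_of_ne_zero Xr_ne_zero, ?_⟩
  intro x hx
  obtain ⟨n, r, rfl⟩ := (mem_Asub ht0).1 hx
  obtain ⟨w, hw⟩ := exists_Xdiv ht n
  refine ⟨r * w, ?_⟩
  rw [map_mul, smul_comm, smul_y_eq ht0 hw, Algebra.smul_def]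

def AF {t : R} (ht : constantCoeff (R := ℚ) (t : PowerSeries ℚ) ≠ 0) :
    FractionalIdeal (nonZeroDivisors R) K := ⟨Asub t, frac_Asub ht⟩

lemma mem_AF {t : R} (ht : constantCoeff (R := ℚ) (t : PowerSeries ℚ) ≠ 0) {x : K} :
    x ∈ AF ht ↔ ∃ (n : ℕ) (r : R), r • yel t ^ n = x :=
  mem_Asub (fun h => ht (by rw [h]; simp))

lemma coe_two : ((2 : R) : PowerSeries ℚ) = C (R := ℚ) 2 := by
  rw [map_ofNat]
  norm_cast

lemma coe_three : ((3 : R) : PowerSeries ℚ) = C (R := ℚ) 3 := by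
  rw [map_ofNat]
  norm_cast

lemma cc_two : constantCoeff (R := ℚ) ((2 : R) : PowerSeries ℚ) ≠ 0 := by
  rw [coe_two]; simp

lemma cc_three : constantCoeff (R := ℚ) ((3 : R) : PowerSeries ℚ) ≠ 0 := by
  rw [coe_three]; simp

lemma two_ne_R : (2 : R) ≠ 0 := fun h => cc_two (by rw [h]; simp)

lemma three_ne_R : (3 : R) ≠ 0 := fun h => cc_three (by rw [h]; simp)

lemma int_pow3_zero {x : ℤ} (h : ∀ n : ℕ, ∃ y : ℤ, x = 3 ^ n * y) : x = 0 := by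
  by_contra hx
  obtain ⟨y, hy⟩ := h x.natAbs
  have h3 : (3 : ℤ) ^ x.natAbs ∣ |x| := (dvd_abs _ _).2 ⟨y, hy⟩
  have hle : (3 : ℤ) ^ x.natAbs ≤ |x| := Int.le_of_dvd (abs_pos.2 hx) h3
  have hlt : (x.natAbs : ℤ) < (3 : ℤ) ^ x.natAbs := by
    exact_mod_cast Nat.lt_pow_self (n := x.natAbs) (by norm_num)
  rw [Int.abs_eq_natAbs] at hle
  omega

lemma mem_inf_FI {A B : FractionalIdeal (nonZeroDivisors R) K} {x : K} :
    x ∈ A ⊓ B ↔ x ∈ A ∧ x ∈ B := by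
  rw [← FractionalIdeal.mem_coe, FractionalIdeal.coe_inf, Submodule.mem_inf]
  simp [FractionalIdeal.mem_coe]

lemma one_le_AF {t : R} (ht : constantCoeff (R := ℚ) (t : PowerSeries ℚ) ≠ 0) :
    (1 : FractionalIdeal (nonZeroDivisors R) K) ≤ AF ht := by
  intro x hx
  obtain ⟨r, hr⟩ := (FractionalIdeal.mem_one_iff _).1 hx
  refine (mem_AF ht).2 ⟨0, r, ?_⟩
  rw [pow_zero, Algebra.smul_def, mul_one, hr]

lemma AF_ne_zero {t : R} (ht : constantCoeff (R := ℚ) (t : PowerSeries ℚ) ≠ 0) :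
    AF ht ≠ 0 := by
  intro h
  have h1 : (1 : K) ∈ AF ht := one_le_AF ht ((FractionalIdeal.mem_one_iff _).2 ⟨1, map_one _⟩)
  rw [h] at h1
  exact one_ne_zero ((FractionalIdeal.mem_zero_iff _).1 h1)

lemma inf_le_one_AB :
    AF cc_two ⊓ AF cc_three ≤ (1 : FractionalIdeal (nonZeroDivisors R) K) := by
  intro x hx
  obtain ⟨hxA, hxB⟩ := mem_inf_FI.1 hx
  obtain ⟨n, r, hr⟩ := (mem_AF cc_two).1 hxA
  obtain ⟨m, s, hs⟩ := (mem_AF cc_three).1 hxB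
  have hr' : algebraMap R K r = x * algebraMap R K 2 ^ n := by
    rw [← hr, Algebra.smul_def, yel, inv_pow]
    have : (algebraMap R K 2) ^ n ≠ 0 := pow_ne_zero _ (alg_ne two_ne_R)
    field_simp
  have hs' : algebraMap R K s = x * algebraMap R K 3 ^ m := by
    rw [← hs, Algebra.smul_def, yel, inv_pow]
    have : (algebraMap R K 3) ^ m ≠ 0 := pow_ne_zero _ (alg_ne three_ne_R)
    field_simp
  have key : (3 : R) ^ m * r = (2 : R) ^ n * s := by
    apply alg_inj
    rw [map_mul, map_mul, map_pow, map_pow, hr', hs']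
    ring
  obtain ⟨zr, hzr⟩ := mem_Rs.1 r.2
  obtain ⟨zs, hzs⟩ := mem_Rs.1 s.2
  have hcc : (3 : ℚ) ^ m * (zr : ℚ) = (2 : ℚ) ^ n * (zs : ℚ) := by
    have h1 := congrArg (fun f : R => constantCoeff (R := ℚ) (f : PowerSeries ℚ)) key
    have e1 : (((3 : R) ^ m * r : R) : PowerSeries ℚ) = ((3:R) : PowerSeries ℚ) ^ m * (r : PowerSeries ℚ) := rfl
    have e2 : (((2 : R) ^ n * s : R) : PowerSeries ℚ) = ((2:R) : PowerSeries ℚ) ^ n * (s : PowerSeries ℚ) := rfl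
    rw [e1, e2, coe_two, coe_three] at h1
    simpa [hzr.symm, hzs.symm] using h1
  have hint : (3 : ℤ) ^ m * zr = 2 ^ n * zs := by exact_mod_cast hcc
  have hcop : IsCoprime ((2:ℤ) ^ n) ((3:ℤ) ^ m) :=
    (Int.isCoprime_iff_gcd_eq_one.2 (by norm_num)).pow
  have hdvd : (2:ℤ) ^ n ∣ zr :=
    hcop.dvd_of_dvd_mul_left ⟨zs, by linarith [hint]⟩
  obtain ⟨z', hz'⟩ := hdvd
  have hw : ((C (R := ℚ) ((2 : ℚ) ^ n)⁻¹ * (r : PowerSeries ℚ)) : PowerSeries ℚ) ∈ Rs := by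
    refine mem_Rs.2 ⟨z', ?_⟩
    rw [map_mul, constantCoeff_C, ← hzr, hz']
    push_cast
    field_simp
  have hwr : (2 : R) ^ n * ⟨C (R := ℚ) ((2 : ℚ) ^ n)⁻¹ * (r : PowerSeries ℚ), hw⟩ = r := by
    apply Subtype.ext
    show ((2:R) : PowerSeries ℚ) ^ n * (C (R := ℚ) ((2 : ℚ) ^ n)⁻¹ * (r : PowerSeries ℚ))
        = (r : PowerSeries ℚ)
    rw [coe_two, ← map_pow, ← mul_assoc, ← map_mul,
      mul_inv_cancel₀ (by positivity : ((2:ℚ)^n) ≠ 0), map_one, one_mul]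
  refine (FractionalIdeal.mem_one_iff _).2 ⟨⟨C (R := ℚ) ((2 : ℚ) ^ n)⁻¹ * (r : PowerSeries ℚ), hw⟩, ?_⟩
  rw [← hr]
  exact (smul_y_eq two_ne_R hwr).symm

lemma mulXr_mem {t : R} (ht : constantCoeff (R := ℚ) (t : PowerSeries ℚ) ≠ 0) {y : K}
    (hy : y ∈ AF ht) :
    algebraMap R K Xr * y ∈ (1 : FractionalIdeal (nonZeroDivisors R) K) := by
  have ht0 : t ≠ 0 := fun h => ht (by rw [h]; simp)
  obtain ⟨n, r, rfl⟩ := (mem_AF ht).1 hy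
  obtain ⟨w, hw⟩ := exists_Xdiv ht n
  refine (FractionalIdeal.mem_one_iff _).2 ⟨r * w, ?_⟩
  calc algebraMap R K (r * w) = r • algebraMap R K w := by
        rw [map_mul, Algebra.smul_def]
    _ = r • (Xr • yel t ^ n) := by rw [smul_y_eq ht0 hw]
    _ = algebraMap R K Xr * (r • yel t ^ n) := by
        rw [Algebra.smul_def (A := K) Xr, mul_smul_comm]
  -- done

lemma one_div_AF_ne_zero {t : R} (ht : constantCoeff (R := ℚ) (t : PowerSeries ℚ) ≠ 0) :
    (1 : FractionalIdeal (nonZeroDivisors R) K) / AF ht ≠ 0 := by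
  intro h
  have hmem : algebraMap R K Xr ∈ (1 : FractionalIdeal (nonZeroDivisors R) K) / AF ht :=
    (FractionalIdeal.mem_div_iff_of_ne_zero (AF_ne_zero ht)).2 (fun y hy => mulXr_mem ht hy)
  rw [h] at hmem
  exact alg_ne Xr_ne_zero ((FractionalIdeal.mem_zero_iff _).1 hmem)

lemma AF_le_v {t : R} (ht : constantCoeff (R := ℚ) (t : PowerSeries ℚ) ≠ 0) :
    AF ht ≤ 1 / (1 / AF ht) := by
  intro x hx
  refine (FractionalIdeal.mem_div_iff_of_ne_zero (one_div_AF_ne_zero ht)).2 (fun z hz => ?_)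
  have h := (FractionalIdeal.mem_div_iff_of_ne_zero (AF_ne_zero ht)).1 hz x hx
  rwa [mul_comm] at h

lemma div_B_struct {z : K}
    (hz : z ∈ (1 : FractionalIdeal (nonZeroDivisors R) K) / AF cc_three) :
    ∃ u : R, constantCoeff (R := ℚ) (u : PowerSeries ℚ) = 0 ∧ z = algebraMap R K ((3 : R) * u) := by
  have hz' := (FractionalIdeal.mem_div_iff_of_ne_zero (AF_ne_zero cc_three)).1 hz
  have h : ∀ n : ℕ, ∃ u : R, z = algebraMap R K ((3 : R) ^ n * u) := by
    intro n
    have hmem : yel (3 : R) ^ n ∈ AF cc_three := (mem_AF cc_three).2 ⟨n, 1, one_smul _ _⟩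
    obtain ⟨u, hu⟩ := (FractionalIdeal.mem_one_iff _).1 (hz' _ hmem)
    have h3n : (algebraMap R K 3) ^ n ≠ 0 := pow_ne_zero _ (alg_ne three_ne_R)
    refine ⟨u, ?_⟩
    have hzz : z = algebraMap R K u * (algebraMap R K 3) ^ n := by
      rw [hu, yel, inv_pow]
      field_simp
    rw [hzz, map_mul, map_pow]
    ring
  obtain ⟨u1, hu1⟩ := h 1
  rw [pow_one] at hu1
  refine ⟨u1, ?_, hu1⟩
  obtain ⟨zu, hzu⟩ := mem_Rs.1 u1.2
  have hz0 : zu = 0 := by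
    refine int_pow3_zero (fun n => ?_)
    obtain ⟨un, hun⟩ := h (n + 1)
    have heq : (3 : R) * u1 = (3 : R) ^ (n + 1) * un := alg_inj (by rw [← hu1, ← hun])
    have hcan : u1 = (3 : R) ^ n * un := by
      apply mul_left_cancel₀ three_ne_R
      rw [heq]; ring
    obtain ⟨zn, hzn⟩ := mem_Rs.1 un.2
    refine ⟨zn, ?_⟩
    have hc := congrArg (fun f : R => constantCoeff (R := ℚ) (f : PowerSeries ℚ)) hcan
    have e : (((3 : R) ^ n * un : R) : PowerSeries ℚ)
        = ((3 : R) : PowerSeries ℚ) ^ n * (un : PowerSeries ℚ) := rfl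
    rw [e, coe_three, map_mul, map_pow, constantCoeff_C, ← hzu, ← hzn] at hc
    exact_mod_cast hc
  rw [← hzu, hz0, Int.cast_zero]

def x0 : K := yel (2 : R)

lemma x0_mem_A : x0 ∈ AF cc_two :=
  (mem_AF cc_two).2 ⟨1, 1, by rw [one_smul, pow_one, x0]⟩

lemma x0_not_one : x0 ∉ (1 : FractionalIdeal (nonZeroDivisors R) K) := by
  intro h
  obtain ⟨r, hr⟩ := (FractionalIdeal.mem_one_iff _).1 h
  have h2 : (2 : R) * r = 1 := by
    apply alg_inj
    rw [map_mul, hr, map_one, x0, yel]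
    exact mul_inv_cancel₀ (alg_ne two_ne_R)
  obtain ⟨zr, hzr⟩ := mem_Rs.1 r.2
  have hc := congrArg (fun f : R => constantCoeff (R := ℚ) (f : PowerSeries ℚ)) h2
  have e : (((2 : R) * r : R) : PowerSeries ℚ)
      = ((2 : R) : PowerSeries ℚ) * (r : PowerSeries ℚ) := rfl
  rw [e, coe_two, map_mul, constantCoeff_C, ← hzr] at hc
  have e1 : ((1 : R) : PowerSeries ℚ) = 1 := rfl
  rw [e1, map_one] at hc
  have : (2 : ℤ) * zr = 1 := by exact_mod_cast hc
  omega

lemma x0_mem_vB :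
    x0 ∈ (1 : FractionalIdeal (nonZeroDivisors R) K) / (1 / AF cc_three) := by
  refine (FractionalIdeal.mem_div_iff_of_ne_zero (one_div_AF_ne_zero cc_three)).2
    (fun z hz => ?_)
  obtain ⟨u, hcc, rfl⟩ := div_B_struct hz
  have hw' : (C (R := ℚ) ((3 : ℚ) / 2) * (u : PowerSeries ℚ)) ∈ Rs := mem_Rs_of_cc0 (by simp [hcc])
  have h2 : (2 : R) ^ 1 * ⟨C (R := ℚ) ((3 : ℚ) / 2) * (u : PowerSeries ℚ), hw'⟩ = (3 : R) * u := by
    apply Subtype.ext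
    show ((2 : R) : PowerSeries ℚ) ^ 1 * (C (R := ℚ) ((3 : ℚ) / 2) * (u : PowerSeries ℚ))
        = ((3 : R) : PowerSeries ℚ) * (u : PowerSeries ℚ)
    rw [coe_two, coe_three, pow_one, ← mul_assoc, ← map_mul]
    norm_num
  refine (FractionalIdeal.mem_one_iff _).2 ⟨⟨C (R := ℚ) ((3 : ℚ) / 2) * (u : PowerSeries ℚ), hw'⟩, ?_⟩
  calc algebraMap R K (⟨C (R := ℚ) ((3 : ℚ) / 2) * (u : PowerSeries ℚ), hw'⟩ : R)
      = ((3 : R) * u) • yel (2 : R) ^ 1 := (smul_y_eq two_ne_R h2).symm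
    _ = x0 * algebraMap R K ((3 : R) * u) := by
        rw [pow_one, Algebra.smul_def, x0]; ring

theorem final :
    ∃ A B : FractionalIdeal (nonZeroDivisors R) K, A ≠ 0 ∧ B ≠ 0 ∧
      1 / (1 / (A ⊓ B)) < (1 / (1 / A)) ⊓ (1 / (1 / B)) := by
  refine ⟨AF cc_two, AF cc_three, AF_ne_zero _, AF_ne_zero _, ?_⟩
  have hAB : AF cc_two ⊓ AF cc_three = 1 :=
    le_antisymm inf_le_one_AB (le_inf (one_le_AF _) (one_le_AF _))
  rw [hAB, FractionalIdeal.div_one, FractionalIdeal.div_one]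
  refine lt_of_le_of_ne
    (le_inf (le_trans (one_le_AF cc_two) (AF_le_v cc_two))
      (le_trans (one_le_AF cc_three) (AF_le_v cc_three))) ?_
  intro h
  refine x0_not_one ?_
  rw [h]
  exact mem_inf_FI.2 ⟨AF_le_v cc_two x0_mem_A, x0_mem_vB⟩

end St19


/-- there is a Prüfer domain `R` (every nonzero finitely generated ideal is
invertible) and nonzero fractional ideals `A`, `B` of `R` with
`(A ∩ B)_v ⊊ A_v ∩ B_v`, where `I_v = (R : (R : I)) = 1/(1/I)`; in particular the
`v`-operation on a Prüfer domain need not be stable. -/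
theorem statement19 :
    ∃ (R : Type) (_ : CommRing R) (_ : IsDomain R),
      (∀ I : Ideal R, I ≠ ⊥ → I.FG →
        ∃ J : FractionalIdeal (nonZeroDivisors R) (FractionRing R),
          (I : FractionalIdeal (nonZeroDivisors R) (FractionRing R)) * J = 1) ∧
      ∃ A B : FractionalIdeal (nonZeroDivisors R) (FractionRing R), A ≠ 0 ∧ B ≠ 0 ∧
        1 / (1 / (A ⊓ B)) < (1 / (1 / A)) ⊓ (1 / (1 / B)) := by
  exact ⟨St19.R, inferInstance, inferInstance, St19.prufer, St19.final⟩
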